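/- arXiv:1309.7734 — 5 statements merged into one kernel-verified Lean document; each statement's English description precedes it below -/
import Mathlib

section
/- Let r be a positive integer with gcd(r,3)=1 and set d = 3^{2r} + 2. Then gcd(d, 3^{3r} - 1) = 1. -/
/-- For a positive integer `r` with `gcd(r,3) = 1`, the decimation `d = 3^(2r) + 2`
is coprime to the period `3^(3r) - 1`. -/
theorem gcd_decimation_one' (r : ℕ) (hr : 0 < r) (h3 : Nat.gcd r 3 = 1) :
    Nat.gcd (3 ^ (2 * r) + 2) (3 ^ (3 * r) - 1) = 1 := by
  set x : ℕ := 3 ^ r with hx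
  have hx3 : (3 : ℕ) ≤ x := Nat.le_self_pow hr.ne' 3 |>.trans_eq (by rw [hx]) |>.trans_eq rfl
  have e2 : 3 ^ (2 * r) = x ^ 2 := by rw [hx, ← pow_mul, mul_comm]
  have e3 : 3 ^ (3 * r) = x ^ 3 := by rw [hx, ← pow_mul, mul_comm]
  rw [e2, e3]
  set g : ℕ := Nat.gcd (x ^ 2 + 2) (x ^ 3 - 1) with hg
  have ha : g ∣ x ^ 2 + 2 := Nat.gcd_dvd_left _ _
  have hb : g ∣ x ^ 3 - 1 := Nat.gcd_dvd_right _ _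
  have hx1 : 1 ≤ x ^ 3 := Nat.one_le_pow _ _ (by omega)
  have ha' : (g : ℤ) ∣ (x : ℤ) ^ 2 + 2 := by exact_mod_cast Int.natCast_dvd_natCast.mpr ha
  have hb' : (g : ℤ) ∣ (x : ℤ) ^ 3 - 1 := by
    have := Int.natCast_dvd_natCast.mpr hb
    rwa [Nat.cast_sub hx1] at this
    <;> push_cast <;> ring_nf
  have h9 : (g : ℤ) ∣ 9 := by
    have key : (9 : ℤ) = (4 - (2 * x - 1) * x) * ((x : ℤ) ^ 2 + 2)
        + (2 * x - 1) * ((x : ℤ) ^ 3 - 1) := by ring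
    rw [key]
    exact dvd_add (ha'.mul_left _) (hb'.mul_left _)
  have h9n : g ∣ 9 := by exact_mod_cast h9
  have h3x : (3 : ℕ) ∣ x ^ 3 := dvd_pow (dvd_pow_self 3 hr.ne') (by norm_num)
  have hn3 : ¬ (3 : ℕ) ∣ g := by
    intro hdvd
    have : (3 : ℕ) ∣ x ^ 3 - 1 := hdvd.trans hb
    have hx27 : 27 ≤ x ^ 3 := by
      calc (27 : ℕ) = 3 ^ 3 := by norm_num
      _ ≤ x ^ 3 := Nat.pow_le_pow_left hx3 3
    obtain ⟨k, hk⟩ := h3x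
    obtain ⟨m, hm⟩ := this
    omega
  have hle : g ≤ 9 := Nat.le_of_dvd (by norm_num) h9n
  interval_cases g <;> omega
end

section
/- Let K be a field of characteristic 3 and let r be a positive integer. Then for every x in K, (x+1)^(3^{2r} + 2) - x^(3^{2r} + 2) - 1 = (1 - x)·(x^(3^{2r}) - x). -/
/-- In a field of characteristic 3, the key factorization
`(x+1)^(3^(2r)+2) - x^(3^(2r)+2) - 1 = (1-x)(x^(3^(2r)) - x)`. -/
theorem factorization_char_three' (K : Type*) [Field K] [CharP K 3] (r : ℕ) (hr : 0 < r)
    (x : K) :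
    (x + 1) ^ (3 ^ (2 * r) + 2) - x ^ (3 ^ (2 * r) + 2) - 1
      = (1 - x) * (x ^ (3 ^ (2 * r)) - x) := by
  haveI : Fact (Nat.Prime 3) := ⟨by norm_num⟩
  have h : (x + 1) ^ (3 ^ (2 * r)) = x ^ (3 ^ (2 * r)) + 1 ^ (3 ^ (2 * r)) :=
    add_pow_char_pow x 1 3 (2 * r)
  have h3 : (3 : K) = 0 := CharP.cast_eq_zero K 3
  rw [pow_add, h]
  linear_combination (x * x ^ (3 ^ (2 * r)) + x) * h3
end

section
/- Let r be a positive integer with gcd(r,3)=1, let n = 3r, and let d = 3^r + 2. Then the number of pairs (x,y) with x, y in GF(3^n) satisfying both x + y + 1 = 0 and x^d + y^d + 1 = 0 is exactly 3^r. -/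
open Polynomial

lemma aux_card_fixed (r : ℕ) (hr : 0 < r) (n : ℕ) (hn : n = 3 * r) :
    Set.ncard {x : GaloisField 3 n | x ^ (3 ^ r) = x} = 3 ^ r := by
  have hn0 : n ≠ 0 := by omega
  classical
  haveI : Fintype (GaloisField 3 n) := Fintype.ofFinite _
  have hcard : Fintype.card (GaloisField 3 n) = 3 ^ n := by
    rw [← Nat.card_eq_fintype_card, GaloisField.card 3 n hn0]
  set q : ℕ := 3 ^ r with hq
  have hq1 : 1 < q := Nat.one_lt_pow (by omega) (by norm_num)
  have hqn : q * q * q = 3 ^ n := by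
    rw [hq, hn, ← pow_add, ← pow_add]; ring_nf
  set g : (GaloisField 3 n)[X] := X ^ q - X with hg
  set f : (GaloisField 3 n)[X] := X ^ Fintype.card (GaloisField 3 n) - X with hf
  have h1 : g ^ q = X ^ (q * q) - X ^ q := by
    rw [hg, sub_pow_char_pow, ← pow_mul]
  have h2 : g ^ (q * q) = X ^ (q * q * q) - X ^ (q * q) := by
    rw [pow_mul, h1, hq, sub_pow_char_pow, ← hq, ← pow_mul, ← pow_mul]
  have hgd : g ∣ f := by
    have hfe : f = g ^ (q * q) + g ^ q + g := by
      rw [h1, h2, hf, hcard, ← hqn, hg]; ring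
    rw [hfe]
    exact dvd_add (dvd_add (dvd_pow_self _ (by positivity)) (dvd_pow_self _ (by positivity))) dvd_rfl
  have hgdeg : g.natDegree = q := FiniteField.X_pow_card_sub_X_natDegree_eq _ hq1
  have hfne : f ≠ 0 := FiniteField.X_pow_card_sub_X_ne_zero _
    (by rw [hcard]; exact Nat.one_lt_pow hn0 (by norm_num))
  have hgne : g ≠ 0 := FiniteField.X_pow_card_sub_X_ne_zero _ hq1
  have hfroots : f.roots = Finset.univ.val := FiniteField.roots_X_pow_card_sub_X _
  obtain ⟨h, hfh⟩ := hgd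
  have hhne : h ≠ 0 := by rintro rfl; simp [hfh] at hfne
  have hdegs : f.natDegree = g.natDegree + h.natDegree := by
    rw [hfh, Polynomial.natDegree_mul hgne hhne]
  have hfdeg : f.natDegree = 3 ^ n := by
    rw [hf, hcard]
    exact FiniteField.X_pow_card_sub_X_natDegree_eq _ (Nat.one_lt_pow hn0 (by norm_num))
  have hle : g.roots ≤ f.roots := Polynomial.roots.le_of_dvd hfne ⟨h, hfh⟩
  have hnodup : g.roots.Nodup := by
    rw [hfroots] at hle
    exact Multiset.nodup_of_le hle Finset.univ.nodup
  have hcardf : Multiset.card f.roots = 3 ^ n := by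
    rw [hfroots]; simpa using hcard
  have hcardmul : Multiset.card f.roots = Multiset.card g.roots + Multiset.card h.roots := by
    rw [hfh, Polynomial.roots_mul (by rw [← hfh]; exact hfne), Multiset.card_add]
  have hcg : Multiset.card g.roots = q := by
    have ha : Multiset.card g.roots ≤ q := hgdeg ▸ Polynomial.card_roots' g
    have hb : Multiset.card h.roots ≤ h.natDegree := Polynomial.card_roots' h
    omega
  have hsetT : {x : GaloisField 3 n | x ^ q = x} = ↑g.roots.toFinset := by
    ext x
    simp only [Set.mem_setOf_eq, Finset.coe_sort_coe, Multiset.mem_toFinset, Finset.mem_coe,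
      Polynomial.mem_roots hgne, hg, Polynomial.IsRoot.def, Polynomial.eval_sub,
      Polynomial.eval_pow, Polynomial.eval_X, sub_eq_zero]
    rw [← hg, Polynomial.mem_roots hgne, hg]
    simp [Polynomial.IsRoot.def, sub_eq_zero]
  rw [hsetT, Set.ncard_coe_finset, Multiset.toFinset_card_of_nodup hnodup, hcg]

/-- For `n = 3r` with `gcd(r,3) = 1` and `d = 3^r + 2`, the number of pairs
`(x, y)` in `GF(3^n)^2` with `x + y + 1 = 0` and `x^d + y^d + 1 = 0` is `3^r`. -/
theorem count_common_solutions (r : ℕ) (hr : 0 < r) (h3 : Nat.gcd r 3 = 1)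
    (n d : ℕ) (hn : n = 3 * r) (hd : d = 3 ^ r + 2) :
    Set.ncard {p : GaloisField 3 n × GaloisField 3 n |
      p.1 + p.2 + 1 = 0 ∧ p.1 ^ d + p.2 ^ d + 1 = 0} = 3 ^ r := by
  set K := GaloisField 3 n with hK
  set q : ℕ := 3 ^ r with hq
  have hodd : Odd d := by
    rw [hd]
    exact (Odd.pow (by decide : Odd 3)).add_even (by decide)
  have h30 : (3 : K) = 0 := by
    have := CharP.cast_eq_zero K 3
    exact_mod_cast this
  have key : ∀ x : K, x ^ d + (-(1 + x)) ^ d + 1 = (x ^ q - x) * (x - 1) := by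
    intro x
    rw [Odd.neg_pow hodd, hd, pow_add, pow_add, add_pow_char_pow]
    linear_combination (-(x ^ (3^r) * x) - x) * h30
  have hset : {p : K × K | p.1 + p.2 + 1 = 0 ∧ p.1 ^ d + p.2 ^ d + 1 = 0}
      = (fun x : K => (x, -(1 + x))) '' {x : K | x ^ q = x} := by
    ext ⟨x, y⟩
    simp only [Set.mem_setOf_eq, Set.mem_image, Prod.mk.injEq]
    constructor
    · rintro ⟨h1, h2⟩
      have hy : y = -(1 + x) := by linear_combination h1
      refine ⟨x, ?_, rfl, hy.symm⟩
      subst hy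
      rw [key x] at h2
      rcases mul_eq_zero.mp h2 with h | h
      · exact sub_eq_zero.mp h
      · rw [sub_eq_zero.mp h]; exact one_pow q
    · rintro ⟨a, ha, rfl, rfl⟩
      refine ⟨by ring, ?_⟩
      rw [key a, ha, sub_self, zero_mul]
  rw [hset, Set.ncard_image_of_injective _ (fun a b hab => (Prod.mk.injEq _ _ _ _ ▸ hab).1 ▸ congrArg Prod.fst hab)]
  exact aux_card_fixed r hr n hn
end

section
/- Let r be a positive integer with gcd(r,3)=1, let n = 3r, and let d = 3^{2r} + 2. Then the number of pairs (x,y) with x, y in GF(3^n) satisfying both x + y + 1 = 0 and x^d + y^d + 1 = 0 is exactly 3^r. -/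
open Polynomial

lemma card_fixed_pow {K : Type*} [Field K] [Fintype K] [DecidableEq K]
    (q : ℕ) (hq : 1 < q) (hdvd : q - 1 ∣ Fintype.card K - 1) :
    Set.ncard {x : K | x ^ q = x} = q := by
  have hfne : (X ^ q - X : K[X]) ≠ 0 := FiniteField.X_pow_card_sub_X_ne_zero K hq
  have hgne : (X ^ Fintype.card K - X : K[X]) ≠ 0 :=
    FiniteField.X_pow_card_sub_X_ne_zero K Fintype.one_lt_card
  obtain ⟨m, hm⟩ := hdvd
  have hdvd' : (X ^ q - X : K[X]) ∣ (X ^ Fintype.card K - X : K[X]) := by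
    have e1 : q - 1 + 1 = q := by omega
    have e2 : Fintype.card K - 1 + 1 = Fintype.card K := by
      have := Fintype.one_lt_card (α := K); omega
    have h1 : (X : K[X]) ^ q - X = X * (X ^ (q - 1) - 1) := by
      rw [mul_sub, mul_one, ← pow_succ', e1]
    have h2 : (X : K[X]) ^ Fintype.card K - X = X * (X ^ (Fintype.card K - 1) - 1) := by
      rw [mul_sub, mul_one, ← pow_succ', e2]
    rw [h1, h2, hm]
    refine mul_dvd_mul_left _ ?_
    have := sub_dvd_pow_sub_pow ((X : K[X]) ^ (q - 1)) 1 m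
    simpa [← pow_mul] using this
  have hroots : (X ^ Fintype.card K - X : K[X]).roots = Finset.univ.val :=
    FiniteField.roots_X_pow_card_sub_X K
  have hgsplits : Splits (X ^ Fintype.card K - X : K[X]) := by
    rw [splits_iff_card_roots, hroots,
      FiniteField.X_pow_card_sub_X_natDegree_eq K Fintype.one_lt_card]
    simp [Finset.card_univ]
  have hfsplits : Splits (X ^ q - X : K[X]) :=
    Splits.of_dvd hgsplits hgne hdvd'
  have hcard : (X ^ q - X : K[X]).roots.card = q := by
    rw [splits_iff_card_roots.mp hfsplits,
      FiniteField.X_pow_card_sub_X_natDegree_eq K hq]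
  have hnodup : (X ^ q - X : K[X]).roots.Nodup :=
    Multiset.nodup_of_le (roots.le_of_dvd hgne hdvd') (hroots ▸ Finset.univ.nodup)
  have hset : {x : K | x ^ q = x} = ↑(X ^ q - X : K[X]).roots.toFinset := by
    ext x
    simp only [Set.mem_setOf_eq, Finset.coe_sort_coe, Multiset.mem_toFinset,
      Finset.mem_coe, mem_roots hfne, IsRoot, eval_sub, eval_pow, eval_X,
      sub_eq_zero]
  rw [hset, Set.ncard_coe_finset, Multiset.toFinset_card_of_nodup hnodup, hcard]

/-- For `n = 3r` with `gcd(r,3) = 1` and `d = 3^(2r) + 2`, the number of pairs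
`(x, y)` in `GF(3^n)^2` with `x + y + 1 = 0` and `x^d + y^d + 1 = 0` is `3^r`. -/
theorem count_common_solutions' (r : ℕ) (hr : 0 < r) (h3 : Nat.gcd r 3 = 1)
    (n d : ℕ) (hn : n = 3 * r) (hd : d = 3 ^ (2 * r) + 2) :
    Set.ncard {p : GaloisField 3 n × GaloisField 3 n |
      p.1 + p.2 + 1 = 0 ∧ p.1 ^ d + p.2 ^ d + 1 = 0} = 3 ^ r := by
  haveI : Fact (Nat.Prime 3) := ⟨by norm_num⟩
  classical
  haveI : Fintype (GaloisField 3 n) := Fintype.ofFinite _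
  set K := GaloisField 3 n with hK
  have hcardK : Fintype.card K = 3 ^ n := by
    rw [← Nat.card_eq_fintype_card, GaloisField.card 3 n (by omega)]
  have hchar : (3 : K) = 0 := CharP.cast_eq_zero K 3
  have hall : ∀ x : K, x ^ (3 ^ n) = x := by
    intro x
    rw [← hcardK]; exact FiniteField.pow_card x
  have hiff : ∀ x : K, x ^ (3 ^ (2 * r)) = x ↔ x ^ (3 ^ r) = x := by
    intro x
    constructor
    · intro h
      have h3n : x ^ (3 ^ (3 * r)) = x := by rw [← hn]; exact hall x
      have he : x ^ (3 ^ (3 * r)) = (x ^ (3 ^ (2 * r))) ^ (3 ^ r) := by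
        rw [← pow_mul, ← pow_add]; congr 2; ring
      rw [he, h] at h3n
      exact h3n
    · intro h
      have he : x ^ (3 ^ (2 * r)) = (x ^ (3 ^ r)) ^ (3 ^ r) := by
        rw [← pow_mul, ← pow_add]; congr 2; ring
      rw [he, h, h]
  have hodd : Odd (3 ^ (2 * r)) := Odd.pow (by decide)
  have hkey : ∀ x : K, x ^ d + (-1 - x) ^ d + 1 = (x - x ^ (3 ^ (2 * r))) * (1 - x) := by
    intro x
    have hfrob : (-1 - x) ^ (3 ^ (2 * r)) = -1 - x ^ (3 ^ (2 * r)) := by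
      have hsum := add_pow_char_pow (-1 : K) (-x) 3 (2 * r)
      have hneg1 : (-1 : K) ^ (3 ^ (2 * r)) = -1 := Odd.neg_one_pow hodd
      have hnegx : (-x : K) ^ (3 ^ (2 * r)) = -(x ^ (3 ^ (2 * r))) := Odd.neg_pow hodd x
      calc (-1 - x) ^ (3 ^ (2 * r)) = (-1 + -x) ^ (3 ^ (2 * r)) := by rw [sub_eq_add_neg]
        _ = (-1 : K) ^ (3 ^ (2 * r)) + (-x) ^ (3 ^ (2 * r)) := hsum
        _ = -1 - x ^ (3 ^ (2 * r)) := by rw [hneg1, hnegx, ← sub_eq_add_neg]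
    have hxd : x ^ d = x ^ (3 ^ (2 * r)) * x ^ 2 := by rw [hd, pow_add]
    have hyd : (-1 - x) ^ d = (-1 - x ^ (3 ^ (2 * r))) * (-1 - x) ^ 2 := by
      rw [hd, pow_add, hfrob]
    rw [hxd, hyd]
    set t := x ^ (3 ^ (2 * r))
    linear_combination (-x - t * x) * hchar
  have hsetEq : {p : K × K | p.1 + p.2 + 1 = 0 ∧ p.1 ^ d + p.2 ^ d + 1 = 0} =
      (fun x => (x, -1 - x)) '' {x : K | x ^ (3 ^ r) = x} := by
    ext ⟨x, y⟩
    simp only [Set.mem_setOf_eq, Set.mem_image, Prod.mk.injEq]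
    constructor
    · rintro ⟨h1, h2⟩
      have hy : y = -1 - x := by linear_combination h1
      refine ⟨x, ?_, rfl, hy.symm⟩
      rw [hy, hkey x] at h2
      rcases mul_eq_zero.mp h2 with h | h
      · exact (hiff x).mp (sub_eq_zero.mp h).symm
      · have hx1 : x = 1 := by linear_combination -h
        rw [hx1]; exact one_pow _
    · rintro ⟨a, ha, rfl, rfl⟩
      refine ⟨by ring, ?_⟩
      rw [hkey a, (hiff a).mpr ha]
      ring
  rw [hsetEq, Set.ncard_image_of_injective _ (fun a b h => (Prod.mk.injEq _ _ _ _ ▸ h).1)]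
  have hq1 : 1 < 3 ^ r := Nat.one_lt_pow (by omega) (by norm_num)
  refine card_fixed_pow (3 ^ r) hq1 ?_
  rw [hcardK, hn]
  have he : (3:ℕ) ^ (3 * r) = (3 ^ r) ^ 3 := by rw [← pow_mul]; ring_nf
  rw [he]
  exact Nat.sub_dvd_pow_sub_pow (3 ^ r) 1 3
end

section
/- Let r be a positive integer with gcd(r,3)=1, n = 3r, and let d = 3^r + 2 or d = 3^{2r} + 2. Then Σ_{z ∈ GF(3^n)} S_d(z)^3 = 3^{7r}. -/
noncomputable instance (p n : ℕ) [Fact p.Prime] : Fintype (GaloisField p n) :=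
  Fintype.ofFinite _

/-- The Weil sum `S_d(z) = ∑_{x ∈ GF(3^n)} ω^{Tr(zx - x^d)}`, where `ω = e^{2πi/3}`
and `Tr` is the absolute trace from `GF(3^n)` to `GF(3)`. -/
noncomputable def ternaryWeilSum (n d : ℕ) (z : GaloisField 3 n) : ℂ :=
  ∑ x : GaloisField 3 n,
    Complex.exp (2 * Real.pi * Complex.I / 3) ^
      (Algebra.trace (ZMod 3) (GaloisField 3 n) (z * x - x ^ d)).val

open Finset Polynomial
open scoped Classical

namespace TPMaux

noncomputable def ω : ℂ := Complex.exp (2 * Real.pi * Complex.I / 3)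

lemma omega_pow_three : ω ^ 3 = 1 := by
  rw [ω, ← Complex.exp_nat_mul]
  rw [show (3:ℕ) * (2 * Real.pi * Complex.I / 3) = 2 * Real.pi * Complex.I by push_cast; ring]
  exact Complex.exp_two_pi_mul_I

lemma omega_ne_one : ω ≠ 1 := by
  intro h
  rw [ω, Complex.exp_eq_one_iff] at h
  obtain ⟨k, hk⟩ := h
  have h2 : (2 * (Real.pi:ℂ) * Complex.I) ≠ 0 := by
    simp [Real.pi_ne_zero, Complex.I_ne_zero]
  have h3 : (2 * (Real.pi:ℂ) * Complex.I) * (1/3 : ℂ) = (2 * (Real.pi:ℂ) * Complex.I) * (k:ℂ) := by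
    linear_combination hk
  have h4 : (1/3 : ℂ) = (k:ℂ) := mul_left_cancel₀ h2 h3
  have h5 : ((k * 3 : ℤ) : ℂ) = ((1 : ℤ) : ℂ) := by push_cast; linear_combination 3 * h4.symm
  have := Int.cast_injective (α := ℂ) h5
  omega

lemma omega_pow_mod (k : ℕ) : ω ^ (k % 3) = ω ^ k := by
  conv_rhs => rw [← Nat.div_add_mod k 3, pow_add, pow_mul, omega_pow_three, one_pow, one_mul]

variable (n : ℕ)

noncomputable def e (a : GaloisField 3 n) : ℂ :=
  ω ^ (Algebra.trace (ZMod 3) (GaloisField 3 n) a).val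

variable {n}

lemma e_zero : e n (0 : GaloisField 3 n) = 1 := by
  simp [e]

lemma e_add (a b : GaloisField 3 n) : e n (a + b) = e n a * e n b := by
  rw [e, e, e, map_add, ZMod.val_add, omega_pow_mod, pow_add]

lemma e_sum_eq_zero {c : GaloisField 3 n} (hc : c ≠ 0) :
    ∑ z : GaloisField 3 n, e n (z * c) = 0 := by
  obtain ⟨t, ht⟩ := Algebra.trace_surjective (ZMod 3) (GaloisField 3 n) 1
  set z0 : GaloisField 3 n := t * c⁻¹ with hz0
  have hz0c : z0 * c = t := by
    rw [hz0, mul_assoc, inv_mul_cancel₀ hc, mul_one]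
  have hval : ((1 : ZMod 3)).val = 1 := by decide
  have he : e n (z0 * c) = ω := by rw [e, hz0c, ht, hval, pow_one]
  have key : e n (z0 * c) * ∑ z : GaloisField 3 n, e n (z * c)
      = ∑ z : GaloisField 3 n, e n (z * c) := by
    rw [Finset.mul_sum]
    refine Fintype.sum_equiv (Equiv.addLeft z0) _ _ fun z => ?_
    rw [← e_add]
    congr 1
    simp [Equiv.addLeft]
    ring
  have key2 : (e n (z0 * c) - 1) * ∑ z : GaloisField 3 n, e n (z * c) = 0 := by
    linear_combination key
  rcases mul_eq_zero.mp key2 with h | h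
  · rw [he] at h
    exact (omega_ne_one (by linear_combination h)).elim
  · exact h

lemma e_orthog (hn : n ≠ 0) (c : GaloisField 3 n) :
    ∑ z : GaloisField 3 n, e n (z * c) = if c = 0 then ((3:ℂ) ^ n) else 0 := by
  split_ifs with h
  · subst h
    simp only [mul_zero, e_zero, Finset.sum_const, Finset.card_univ, nsmul_eq_mul, mul_one]
    rw [← Nat.card_eq_fintype_card, GaloisField.card 3 n hn]
    push_cast
    ring
  · exact e_sum_eq_zero h

lemma coprime_aux {r m : ℕ} (hm : 0 < m) (hdvd : 3 * r ∣ 3 * m) :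
    Nat.Coprime (3 ^ m + 2) (3 ^ (3 * r) - 1) := by
  set g := Nat.gcd (3 ^ m + 2) (3 ^ (3 * r) - 1) with hg
  have h1 : (3:ℕ) ^ (3 * r) - 1 ∣ 3 ^ (3 * m) - 1 := by
    obtain ⟨k, hk⟩ := hdvd
    have := Nat.sub_dvd_pow_sub_pow (3 ^ (3 * r)) 1 k
    simpa [one_pow, ← pow_mul, ← hk] using this
  have hg1 : g ∣ 3 ^ m + 2 := Nat.gcd_dvd_left _ _
  have hg2 : g ∣ 3 ^ (3 * m) - 1 := (Nat.gcd_dvd_right _ _).trans h1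
  have hle : (1:ℕ) ≤ 3 ^ (3 * m) := Nat.one_le_pow _ _ (by norm_num)
  have hz1 : (g : ℤ) ∣ (3:ℤ) ^ m + 2 := by
    have := Int.natCast_dvd_natCast.2 hg1; push_cast at this; exact this
  have hz2 : (g : ℤ) ∣ (3:ℤ) ^ (3 * m) - 1 := by
    have := Int.natCast_dvd_natCast.2 hg2
    rwa [Nat.cast_sub hle, Nat.cast_pow] at this
  have h9 : (g : ℤ) ∣ 9 := by
    have hid : (9:ℤ) = ((3:ℤ) ^ m + 2) * ((3 ^ m) ^ 2 - 2 * 3 ^ m + 4) - ((3:ℤ) ^ (3 * m) - 1) := by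
      rw [mul_comm 3 m, pow_mul]; ring
    rw [hid]
    exact dvd_sub (hz1.mul_right _) hz2
  have h9' : g ∣ 9 := by exact_mod_cast h9
  have h3g : ¬ (3 ∣ g) := by
    intro h
    have h32 : (3:ℕ) ∣ 3 ^ m + 2 := h.trans hg1
    have h3m : (3:ℕ) ∣ 3 ^ m := dvd_pow_self 3 hm.ne'
    have : (3:ℕ) ∣ 2 := (Nat.dvd_add_right h3m).mp h32
    norm_num at this
  have hcop : Nat.Coprime 3 g := (Nat.prime_three.coprime_iff_not_dvd).2 h3g
  have : Nat.Coprime g 9 := by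
    have := (hcop.symm.pow_right 2)
    simpa using this
  exact this.eq_one_of_dvd h9'

lemma pow_d_bijective {K : Type*} [Field K] [Fintype K] {d : ℕ} (hd : d ≠ 0)
    (h : Nat.Coprime d (Fintype.card K - 1)) :
    Function.Bijective (fun x : K => x ^ d) := by
  rw [Finite.injective_iff_bijective.symm]
  intro x y hxy
  simp only at hxy
  rcases eq_or_ne x 0 with rfl | hx
  · rw [zero_pow hd] at hxy
    exact (pow_eq_zero_iff hd).mp hxy.symm |>.symm
  rcases eq_or_ne y 0 with rfl | hy
  · rw [zero_pow hd] at hxy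
    exact absurd hxy ((pow_ne_zero d hx))
  have hcard : (Nat.card Kˣ).Coprime d := by
    rw [Nat.card_eq_fintype_card, Fintype.card_units]
    exact h.symm
  have hbij := Nat.Coprime.pow_left_bijective (G := Kˣ) hcard
  have : Units.mk0 x hx ^ d = Units.mk0 y hy ^ d := by
    ext
    simpa using hxy
  have := hbij.injective this
  simpa using congrArg Units.val this

lemma card_pow_eq_self {r n : ℕ} (hr : 0 < r) (hn : n = 3 * r) :
    (Finset.univ.filter (fun u : GaloisField 3 n => u ^ (3 ^ r) = u)).card = 3 ^ r := by
  have hn0 : n ≠ 0 := by omega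
  set F := GaloisField 3 n
  have hFcard : Fintype.card F = 3 ^ n := by
    rw [← Nat.card_eq_fintype_card]; exact GaloisField.card 3 n hn0
  set f : F[X] := X ^ (3 ^ r) - X with hf
  have hf_sep : Separable f := galois_poly_separable 3 (3 ^ r) (dvd_pow_self 3 hr.ne')
  have hfne : f ≠ 0 := FiniteField.X_pow_card_pow_sub_X_ne_zero F hr.ne' (by norm_num)
  have h31 : (1:ℕ) ≤ 3 ^ r := Nat.one_le_pow _ _ (by norm_num)
  have h31' : (1:ℕ) ≤ 3 ^ n := Nat.one_le_pow _ _ (by norm_num)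
  obtain ⟨k, hk⟩ : (3:ℕ) ^ r - 1 ∣ 3 ^ n - 1 := by
    have := Nat.sub_dvd_pow_sub_pow (3 ^ r) 1 3
    simpa [one_pow, ← pow_mul, hn, mul_comm r 3] using this
  have hdvd : f ∣ (X ^ Fintype.card F - X : F[X]) := by
    have e1 : (3:ℕ) ^ r = (3 ^ r - 1) + 1 := by omega
    have e2 : Fintype.card F = (3 ^ n - 1) + 1 := by rw [hFcard]; omega
    have hf1 : f = X * (X ^ (3 ^ r - 1) - 1) := by
      have hx : (X : F[X]) ^ (3 ^ r) = X ^ (3 ^ r - 1) * X := by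
        conv_lhs => rw [e1, pow_succ]
      rw [hf, hx]; ring
    have hg1 : (X ^ Fintype.card F - X : F[X]) = X * (X ^ (3 ^ n - 1) - 1) := by
      have hx : (X : F[X]) ^ (Fintype.card F) = X ^ (3 ^ n - 1) * X := by
        conv_lhs => rw [e2, pow_succ]
      rw [hx]; ring
    rw [hf1, hg1]
    refine mul_dvd_mul_left _ ?_
    have := sub_dvd_pow_sub_pow (X ^ (3 ^ r - 1) : F[X]) 1 k
    simpa [one_pow, ← pow_mul, ← hk] using this
  have hgne : (X ^ Fintype.card F - X : F[X]) ≠ 0 :=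
    FiniteField.X_pow_card_sub_X_ne_zero F Fintype.one_lt_card
  have hsplitg : Splits (X ^ Fintype.card F - X : F[X]) := by
    rw [splits_iff_card_roots, FiniteField.roots_X_pow_card_sub_X, ← Finset.card_def,
      Finset.card_univ, FiniteField.X_pow_card_sub_X_natDegree_eq F Fintype.one_lt_card]
  have hsplit : Splits f := hsplitg.of_dvd hgne hdvd
  have hroots_card : Multiset.card f.roots = 3 ^ r := by
    rw [splits_iff_card_roots] at hsplit
    rw [hsplit, hf, FiniteField.X_pow_card_pow_sub_X_natDegree_eq F hr.ne' (by norm_num)]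
  have hnodup : f.roots.Nodup := Polynomial.nodup_roots hf_sep
  have hset : Finset.univ.filter (fun u : F => u ^ (3 ^ r) = u) = f.roots.toFinset := by
    ext u
    simp only [Finset.mem_filter, Finset.mem_univ, true_and, Multiset.mem_toFinset,
      mem_roots hfne, IsRoot.def, hf, eval_sub, eval_pow, eval_X, sub_eq_zero]
    rw [mem_roots (by rw [← hf]; exact hfne), IsRoot.def, eval_sub, eval_pow, eval_X, sub_eq_zero]
  rw [hset, Multiset.toFinset_card_of_nodup hnodup, hroots_card]

lemma sol_step {n : ℕ} (m : ℕ) (u : GaloisField 3 n) :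
    u ^ (3 ^ m + 2) + (1 - u) ^ (3 ^ m + 2) = 1 ↔ u ^ (3 ^ m) = u := by
  set a := u ^ (3 ^ m) with ha
  have hfrob : (1 - u) ^ (3 ^ m) = 1 - a := by
    rw [sub_pow_char_pow, one_pow, ha]
  have hd1 : u ^ (3 ^ m + 2) = a * u ^ 2 := by rw [pow_add, ha]
  have hd2 : (1 - u) ^ (3 ^ m + 2) = (1 - a) * (1 - u) ^ 2 := by rw [pow_add, hfrob]
  have h3 : (3 : GaloisField 3 n) = 0 := CharP.cast_eq_zero _ 3
  have main : u ^ (3 ^ m + 2) + (1 - u) ^ (3 ^ m + 2) - 1 = (u - a) * (1 + u) := by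
    rw [hd1, hd2]
    linear_combination (a * u - u) * h3
  constructor
  · intro h
    have h0 : (u - a) * (1 + u) = 0 := by rw [← main, h, sub_self]
    rcases mul_eq_zero.mp h0 with h1 | h1
    · have h2 := sub_eq_zero.mp h1
      rw [ha] at h2
      exact h2.symm
    · have hu : u = -1 := by linear_combination h1
      have hodd : Odd ((3:ℕ) ^ m) := Odd.pow ⟨1, rfl⟩
      show u ^ 3 ^ m = u
      rw [hu]
      exact hodd.neg_one_pow
  · intro h
    linear_combination main - (1 + u) * h

lemma pow_red {r n : ℕ} (hr : 0 < r) (hn : n = 3 * r) (u : GaloisField 3 n) :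
    u ^ (3 ^ (2 * r)) = u ↔ u ^ (3 ^ r) = u := by
  have hn0 : n ≠ 0 := by omega
  have hc : Fintype.card (GaloisField 3 n) = 3 ^ n := by
    rw [← Nat.card_eq_fintype_card]; exact GaloisField.card 3 n hn0
  have hQ : u ^ (3 ^ n) = u := by
    have := FiniteField.pow_card u; rwa [hc] at this
  constructor
  · intro h
    have he : (3:ℕ) ^ n = 3 ^ (2 * r) * 3 ^ r := by
      subst hn; rw [← pow_add]; congr 1; ring
    rw [he, pow_mul, h] at hQ
    exact hQ
  · intro h
    rw [show 2 * r = r + r by ring, pow_add, pow_mul, h, h]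

set_option maxHeartbeats 1000000 in
lemma main_aux (r : ℕ) (hr : 0 < r) (n m : ℕ) (hn : n = 3 * r) (hm : 0 < m)
    (hdvd : 3 * r ∣ 3 * m)
    (hiff : ∀ u : GaloisField 3 n, u ^ (3 ^ m) = u ↔ u ^ (3 ^ r) = u) :
    ∑ z : GaloisField 3 n, (ternaryWeilSum n (3 ^ m + 2) z) ^ 3 = 3 ^ (7 * r) := by
  classical
  set d := 3 ^ m + 2 with hd
  have hn0 : n ≠ 0 := by omega
  have hd0 : d ≠ 0 := by positivity
  have hdodd : Odd d := by
    have : Odd ((3:ℕ) ^ m) := Odd.pow ⟨1, rfl⟩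
    exact this.add_even (by norm_num)
  have hcard : Fintype.card (GaloisField 3 n) = 3 ^ n := by
    rw [← Nat.card_eq_fintype_card]; exact GaloisField.card 3 n hn0
  have hcop : Nat.Coprime d (Fintype.card (GaloisField 3 n) - 1) := by
    rw [hcard, hn]
    exact coprime_aux hm hdvd
  have hbij : Function.Bijective (fun x : GaloisField 3 n => x ^ d) :=
    pow_d_bijective hd0 hcop
  have hWS : ∀ z : GaloisField 3 n,
      ternaryWeilSum n d z = ∑ x : GaloisField 3 n, e n (z * x - x ^ d) := fun z => rfl
  -- the inner exponential "constant" part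
  set E : GaloisField 3 n → GaloisField 3 n → GaloisField 3 n → ℂ :=
    fun x y w => e n (-(x ^ d) + -(y ^ d) + -(w ^ d)) with hE
  have step1 : ∀ z : GaloisField 3 n, (ternaryWeilSum n d z) ^ 3 =
      ∑ x : GaloisField 3 n, ∑ y : GaloisField 3 n, ∑ w : GaloisField 3 n,
        e n (z * (x + y + w)) * E x y w := by
    intro z
    rw [hWS]
    rw [show (∑ x : GaloisField 3 n, e n (z * x - x ^ d)) ^ 3
        = (∑ x : GaloisField 3 n, e n (z * x - x ^ d)) *
          ((∑ x : GaloisField 3 n, e n (z * x - x ^ d)) *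
           (∑ x : GaloisField 3 n, e n (z * x - x ^ d))) by ring]
    rw [Finset.sum_mul_sum]
    rw [Finset.sum_mul]
    refine Finset.sum_congr rfl fun x _ => ?_
    rw [Finset.mul_sum]
    refine Finset.sum_congr rfl fun y _ => ?_
    rw [Finset.mul_sum]
    refine Finset.sum_congr rfl fun w _ => ?_
    have l : e n (z * x - x ^ d) * (e n (z * y - y ^ d) * e n (z * w - w ^ d))
        = e n ((z * x - x ^ d) + ((z * y - y ^ d) + (z * w - w ^ d))) := by
      rw [e_add, e_add]
    have r' : e n (z * (x + y + w)) * E x y w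
        = e n (z * (x + y + w) + (-(x ^ d) + -(y ^ d) + -(w ^ d))) := by
      rw [hE, e_add]
    rw [l, r']
    congr 1
    ring
  have A2 : (∑ z : GaloisField 3 n, ∑ x : GaloisField 3 n, ∑ y : GaloisField 3 n,
          ∑ w : GaloisField 3 n, e n (z * (x + y + w)) * E x y w)
      = ∑ x : GaloisField 3 n, ∑ y : GaloisField 3 n, ∑ w : GaloisField 3 n,
          (∑ z : GaloisField 3 n, e n (z * (x + y + w))) * E x y w := by
        rw [Finset.sum_comm]
        refine Finset.sum_congr rfl fun x _ => ?_
        rw [Finset.sum_comm]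
        refine Finset.sum_congr rfl fun y _ => ?_
        rw [Finset.sum_comm]
        refine Finset.sum_congr rfl fun w _ => ?_
        rw [← Finset.sum_mul]
  have A3 : (∑ x : GaloisField 3 n, ∑ y : GaloisField 3 n, ∑ w : GaloisField 3 n,
          (∑ z : GaloisField 3 n, e n (z * (x + y + w))) * E x y w)
      = ∑ x : GaloisField 3 n, ∑ y : GaloisField 3 n,
          ((3:ℂ) ^ n) * E x y (-(x + y)) := by
        refine Finset.sum_congr rfl fun x _ => ?_
        refine Finset.sum_congr rfl fun y _ => ?_
        have hcond : ∀ w : GaloisField 3 n, (x + y + w = 0) = (w = -(x + y)) :=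
          fun w => propext ⟨fun h => by linear_combination h, fun h => by linear_combination h⟩
        simp only [e_orthog hn0, hcond, ite_mul, zero_mul,
          Finset.sum_ite_eq', Finset.mem_univ, if_true]
  have A4 : (∑ x : GaloisField 3 n, ∑ y : GaloisField 3 n,
          ((3:ℂ) ^ n) * E x y (-(x + y)))
      = ((3:ℂ) ^ n) * ∑ x : GaloisField 3 n, ∑ y : GaloisField 3 n,
          e n ((x + y) ^ d - x ^ d - y ^ d) := by
        rw [Finset.mul_sum]
        refine Finset.sum_congr rfl fun x _ => ?_
        rw [Finset.mul_sum]
        refine Finset.sum_congr rfl fun y _ => ?_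
        have hEval : E x y (-(x + y)) = e n ((x + y) ^ d - x ^ d - y ^ d) := by
          show e n (-(x ^ d) + -(y ^ d) + -((-(x + y)) ^ d)) = _
          rw [hdodd.neg_pow]
          congr 1
          ring
        rw [hEval]
  have A5 : (∑ x : GaloisField 3 n, ∑ y : GaloisField 3 n,
          e n ((x + y) ^ d - x ^ d - y ^ d))
      = (3:ℂ) ^ n * (3:ℂ) ^ r := by
    have stepC : ∀ x : GaloisField 3 n,
        (∑ y : GaloisField 3 n, e n ((x + y) ^ d - x ^ d - y ^ d))
        = ∑ s : GaloisField 3 n, e n (s ^ d - x ^ d - (s - x) ^ d) := by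
      intro x
      refine (Fintype.sum_equiv (Equiv.subRight x)
        (fun s => e n (s ^ d - x ^ d - (s - x) ^ d))
        (fun y => e n ((x + y) ^ d - x ^ d - y ^ d)) fun s => ?_).symm
      simp only [Equiv.subRight_apply]
      congr 2
      ring
    rw [Finset.sum_congr rfl fun x _ => stepC x]
    rw [Finset.sum_comm]
    rw [← Finset.sum_erase_add _ _ (Finset.mem_univ (0 : GaloisField 3 n))]
    have h0term : (∑ x : GaloisField 3 n,
        e n ((0:GaloisField 3 n) ^ d - x ^ d - ((0:GaloisField 3 n) - x) ^ d))
        = (3:ℂ) ^ n := by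
      have harg : ∀ x : GaloisField 3 n,
          (0:GaloisField 3 n) ^ d - x ^ d - ((0:GaloisField 3 n) - x) ^ d = 0 := by
        intro x
        rw [zero_pow hd0, zero_sub, zero_sub, hdodd.neg_pow]
        ring
      simp only [harg, e_zero, Finset.sum_const, Finset.card_univ, nsmul_eq_mul, mul_one,
        hcard]
      push_cast
      ring
    rw [h0term]
    set c : GaloisField 3 n → GaloisField 3 n :=
      fun u => 1 - u ^ d - (1 - u) ^ d with hc
    have stepE : ∀ s ∈ Finset.univ.erase (0 : GaloisField 3 n),
        (∑ x : GaloisField 3 n, e n (s ^ d - x ^ d - (s - x) ^ d))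
        = ∑ u : GaloisField 3 n, e n (s ^ d * c u) := by
      intro s hs
      have hs0 : s ≠ 0 := Finset.ne_of_mem_erase hs
      refine (Fintype.sum_equiv (Equiv.mulLeft₀ s hs0)
        (fun u => e n (s ^ d * c u))
        (fun x => e n (s ^ d - x ^ d - (s - x) ^ d)) fun u => ?_).symm
      simp only [Equiv.mulLeft₀_apply, hc]
      congr 1
      rw [mul_pow, show s - s * u = s * (1 - u) by ring, mul_pow]
      ring
    rw [Finset.sum_congr rfl stepE]
    rw [Finset.sum_comm]
    have stepF : ∀ u : GaloisField 3 n,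
        (∑ s ∈ Finset.univ.erase (0 : GaloisField 3 n), e n (s ^ d * c u))
        = (if c u = 0 then (3:ℂ) ^ n else 0) - 1 := by
      intro u
      have h1 : (∑ s ∈ Finset.univ.erase (0 : GaloisField 3 n), e n (s ^ d * c u))
          = (∑ s : GaloisField 3 n, e n (s ^ d * c u))
            - e n ((0:GaloisField 3 n) ^ d * c u) := by
        rw [← Finset.sum_erase_add _ _ (Finset.mem_univ (0 : GaloisField 3 n))]
        ring
      have h2 : (∑ s : GaloisField 3 n, e n (s ^ d * c u))
          = ∑ t : GaloisField 3 n, e n (t * c u) :=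
        Fintype.sum_bijective _ hbij _ _ fun s => rfl
      rw [h1, h2, e_orthog hn0, zero_pow hd0, zero_mul, e_zero]
    rw [Finset.sum_congr rfl fun u _ => stepF u]
    rw [Finset.sum_sub_distrib]
    rw [Finset.sum_ite, Finset.sum_const, Finset.sum_const, Finset.sum_const]
    have hfilter : (Finset.univ.filter (fun u : GaloisField 3 n => c u = 0)).card
        = 3 ^ r := by
      have hfeq : (Finset.univ.filter (fun u : GaloisField 3 n => c u = 0))
          = Finset.univ.filter (fun u : GaloisField 3 n => u ^ (3 ^ r) = u) := by
        refine Finset.filter_congr ?_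
        intro u _
        simp only [hc]
        constructor
        · intro h
          exact (hiff u).mp ((sol_step m u).mp (by linear_combination -h))
        · intro h
          have := (sol_step m u).mpr ((hiff u).mpr h)
          linear_combination -this
      rw [hfeq]
      exact card_pow_eq_self hr hn
    rw [hfilter]
    simp only [smul_zero, add_zero, nsmul_eq_mul, Finset.card_univ, hcard, mul_one]
    push_cast
    ring
  rw [Finset.sum_congr rfl fun z _ => step1 z, A2, A3, A4, A5]
  rw [← pow_add, ← pow_add]
  congr 1
  omega
end TPMaux

/-- For `n = 3r` with `gcd(r,3) = 1` and `d = 3^r + 2` or `d = 3^(2r) + 2`, the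
third power moment of the Weil sums equals `3^(7r)`. -/
theorem ternary_third_power_moment (r : ℕ) (hr : 0 < r) (h3 : Nat.gcd r 3 = 1)
    (n d : ℕ) (hn : n = 3 * r) (hd : d = 3 ^ r + 2 ∨ d = 3 ^ (2 * r) + 2) :
    ∑ z : GaloisField 3 n, (ternaryWeilSum n d z) ^ 3 = 3 ^ (7 * r) := by
  rcases hd with rfl | rfl
  · exact TPMaux.main_aux r hr n r hn hr dvd_rfl fun u => Iff.rfl
  · exact TPMaux.main_aux r hr n (2 * r) hn (by omega) ⟨2, by ring⟩
      fun u => TPMaux.pow_red hr hn u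
end
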